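/- arXiv:2007.12786 — 2 statements merged into one kernel-verified Lean document; each statement's English description precedes it below -/
import Mathlib

section
/- Fix integers p ≥ 1 and n ≥ 1 and reals w₁ ≥ 0, w₂ > 0, c > 0. Then there exists a constant C ∈ ℝ, depending only on p, n, w₁, w₂ and c, such that for all data points x₁, …, xₙ ∈ ℝ^p, all mixture weights π₁, π₂ ≥ 0 with π₁ + π₂ = 1, all means μ₁, μ₂ ∈ ℝ^p, and all symmetric positive definite p×p real matrices Σ₁, Σ₂ satisfying det Σ₁ ≤ det Σ₂ and having all eigenvalues at most c, the penalized SIA objective satisfies M ≤ −(n/2)(1 + w₂)( log det( (w₂/(1+w₂)) Σ₂ ) + p ) + C. -/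
open Matrix Real

/-- Multivariate Gaussian density
`N(x; μ, S) = (2π)^{-p/2} (det S)^{-1/2} exp(-(1/2)(x-μ)ᵀ S⁻¹ (x-μ))`. -/
noncomputable def gaussDensity {p : ℕ} (x μ : Fin p → ℝ) (S : Matrix (Fin p) (Fin p) ℝ) : ℝ :=
  (2 * Real.pi) ^ (-(p : ℝ) / 2) * S.det ^ (-(1 : ℝ) / 2) *
    Real.exp (-(1 / 2) * ((x - μ) ⬝ᵥ (S⁻¹ *ᵥ (x - μ))))

/-- Closed form of the KL divergence between the Gaussians `N(μ₁, S₁)` and `N(μ₂, S₂)`. -/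
noncomputable def gaussKL {p : ℕ} (μ₁ : Fin p → ℝ) (S₁ : Matrix (Fin p) (Fin p) ℝ)
    (μ₂ : Fin p → ℝ) (S₂ : Matrix (Fin p) (Fin p) ℝ) : ℝ :=
  (1 / 2) * (Real.log (S₂.det / S₁.det) - p + (S₂⁻¹ * S₁).trace +
    (μ₂ - μ₁) ⬝ᵥ (S₂⁻¹ *ᵥ (μ₂ - μ₁)))

/-- The penalized SIA objective for a two-component Gaussian mixture. -/
noncomputable def siaObj {p n : ℕ} (x : Fin n → Fin p → ℝ) (π₁ π₂ : ℝ)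
    (μ₁ μ₂ : Fin p → ℝ) (S₁ S₂ : Matrix (Fin p) (Fin p) ℝ) (w₁ w₂ : ℝ) : ℝ :=
  (∑ i, Real.log (π₁ * gaussDensity (x i) μ₁ S₁ + π₂ * gaussDensity (x i) μ₂ S₂))
    - w₁ * gaussKL μ₁ S₁ μ₂ S₂ - w₂ * gaussKL μ₂ S₂ μ₁ S₁

/-!
Since `det Σ₁ ≤ det Σ₂`, both component densities are at most `(2π)^{-p/2} (det Σ₁)^{-1/2}`, so
the log-likelihood is at most `-(n/2) log det Σ₁` plus a constant. The first penalty is a KL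
divergence, hence nonnegative. For the second, `tr(Σ₁⁻¹Σ₂)` and `det(Σ₁⁻¹Σ₂)` are the trace and
determinant of a positive definite matrix congruent to `Σ₂`, and `log t ≤ t/k - 1 + log k` on its
eigenvalues gives `tr(Σ₁⁻¹Σ₂) ≥ k (log det(Σ₁⁻¹Σ₂) + p (1 - log k))` for every `k > 0`. With
`w₂ k = n + w₂` the `log det Σ₁` terms cancel, leaving `-(n/2) log det Σ₂` plus a constant, and
`log det Σ₂ ≤ p log c` absorbs the remaining `(n w₂ / 2) log det Σ₂` of the claimed bound.
-/

open scoped MatrixOrder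

lemma mul_log_add_one_sub_log_le {x k : ℝ} (hx : 0 < x) (hk : 0 < k) :
    k * (log x + 1 - log k) ≤ x := by
  have h := log_le_sub_one_of_pos (div_pos hx hk)
  rw [log_div hx.ne' hk.ne', le_sub_iff_add_le, le_div_iff₀ hk] at h
  linarith

namespace Matrix

variable {ι : Type*} [Fintype ι] [DecidableEq ι]

lemma PosDef.dotProduct_inv_mulVec_nonneg {S : Matrix ι ι ℝ} (hS : S.PosDef) (v : ι → ℝ) :
    0 ≤ v ⬝ᵥ (S⁻¹ *ᵥ v) := by
  simpa using hS.inv.posSemidef.dotProduct_mulVec_nonneg v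

lemma PosDef.mul_log_det_add_le_trace {C : Matrix ι ι ℝ} (hC : C.PosDef) {k : ℝ} (hk : 0 < k) :
    k * (log C.det + Fintype.card ι * (1 - log k)) ≤ C.trace := by
  have hev := hC.eigenvalues_pos
  rw [hC.1.det_eq_prod_eigenvalues, hC.1.trace_eq_sum_eigenvalues]
  simp only [RCLike.ofReal_real_eq_id, id_eq]
  rw [log_prod fun i _ => (hev i).ne', ← Finset.card_univ, ← nsmul_eq_mul, ← Finset.sum_const,
    ← Finset.sum_add_distrib, Finset.mul_sum]
  exact Finset.sum_le_sum fun i _ => by linarith [mul_log_add_one_sub_log_le (hev i) hk]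

lemma PosDef.log_det_le {S : Matrix ι ι ℝ} (hS : S.PosDef) {c : ℝ}
    (hc : ∀ i, hS.1.eigenvalues i ≤ c) : log S.det ≤ Fintype.card ι * log c := by
  have hev := hS.eigenvalues_pos
  rw [hS.1.det_eq_prod_eigenvalues]
  simp only [RCLike.ofReal_real_eq_id, id_eq]
  rw [log_prod fun i _ => (hev i).ne', ← Finset.card_univ, ← nsmul_eq_mul, ← Finset.sum_const]
  exact Finset.sum_le_sum fun i _ => log_le_log (hev i) (hc i)

lemma PosDef.exists_posDef_trace_det_eq_inv_mul {A B : Matrix ι ι ℝ} (hA : A.PosDef)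
    (hB : B.PosDef) :
    ∃ C : Matrix ι ι ℝ, C.PosDef ∧ C.trace = (A⁻¹ * B).trace ∧ C.det = B.det / A.det := by
  obtain ⟨X, hX⟩ := CStarAlgebra.nonneg_iff_eq_star_mul_self.mp hA.inv.posSemidef.nonneg
  rw [star_eq_conjTranspose] at hX
  have hXdet : X.det * X.det = A.det⁻¹ := by
    rw [← Ring.inverse_eq_inv', ← det_nonsing_inv, hX, det_mul, det_conjTranspose, star_trivial]
  have hXunit : IsUnit X := by
    refine (isUnit_iff_isUnit_det X).mpr (isUnit_iff_ne_zero.mpr fun h => ?_)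
    rw [h, zero_mul, eq_comm, inv_eq_zero] at hXdet
    exact hA.det_pos.ne' hXdet
  refine ⟨X * B * Xᴴ, hB.mul_mul_conjTranspose_same (vecMul_injective_iff_isUnit.mpr hXunit),
    ?_, ?_⟩
  · rw [hX, mul_assoc, trace_mul_comm, mul_assoc, trace_mul_comm]
  · rw [det_mul, det_mul, det_conjTranspose, star_trivial, div_eq_mul_inv, ← hXdet]
    ring

lemma PosDef.mul_log_det_div_add_le_trace_inv_mul {A B : Matrix ι ι ℝ} (hA : A.PosDef)
    (hB : B.PosDef) {k : ℝ} (hk : 0 < k) :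
    k * (log (B.det / A.det) + Fintype.card ι * (1 - log k)) ≤ (A⁻¹ * B).trace := by
  obtain ⟨C, hC, htr, hdet⟩ := hA.exists_posDef_trace_det_eq_inv_mul hB
  rw [← htr, ← hdet]
  exact hC.mul_log_det_add_le_trace hk

end Matrix

section Gaussian

variable {p : ℕ}

lemma gaussDensity_pos (x μ : Fin p → ℝ) {S : Matrix (Fin p) (Fin p) ℝ} (hS : S.PosDef) :
    0 < gaussDensity x μ S :=
  mul_pos (mul_pos (rpow_pos_of_pos (by positivity) _) (rpow_pos_of_pos hS.det_pos _))
    (exp_pos _)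

lemma gaussDensity_le_of_det_le (x μ : Fin p → ℝ) {S T : Matrix (Fin p) (Fin p) ℝ}
    (hS : S.PosDef) (hT : 0 < T.det) (hTS : T.det ≤ S.det) :
    gaussDensity x μ S ≤ (2 * π) ^ (-(p : ℝ) / 2) * T.det ^ (-(1 : ℝ) / 2) := by
  have hexp : exp (-(1 / 2) * ((x - μ) ⬝ᵥ (S⁻¹ *ᵥ (x - μ)))) ≤ 1 :=
    exp_le_one_iff.mpr (by nlinarith [hS.dotProduct_inv_mulVec_nonneg (x - μ)])
  have hdet : S.det ^ (-(1 : ℝ) / 2) ≤ T.det ^ (-(1 : ℝ) / 2) :=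
    rpow_le_rpow_of_nonpos hT hTS (by norm_num)
  calc gaussDensity x μ S ≤ (2 * π) ^ (-(p : ℝ) / 2) * S.det ^ (-(1 : ℝ) / 2) * 1 := by
        unfold gaussDensity
        have hm : 0 < (2 * π) ^ (-(p : ℝ) / 2) * S.det ^ (-(1 : ℝ) / 2) :=
          mul_pos (rpow_pos_of_pos (by positivity) _) (rpow_pos_of_pos hS.det_pos _)
        gcongr
    _ ≤ _ := by rw [mul_one]; gcongr

lemma log_mixture_gaussDensity_le (x μ₁ μ₂ : Fin p → ℝ) {π₁ π₂ : ℝ} (hπ₁ : 0 ≤ π₁)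
    (hπ₂ : 0 ≤ π₂) (hπ : π₁ + π₂ = 1) {S₁ S₂ : Matrix (Fin p) (Fin p) ℝ} (hS₁ : S₁.PosDef)
    (hS₂ : S₂.PosDef) (hdet : S₁.det ≤ S₂.det) :
    log (π₁ * gaussDensity x μ₁ S₁ + π₂ * gaussDensity x μ₂ S₂) ≤
      -(p / 2) * log (2 * π) - log S₁.det / 2 := by
  have h₁ := gaussDensity_pos x μ₁ hS₁
  have h₂ := gaussDensity_pos x μ₂ hS₂
  have hle₁ := gaussDensity_le_of_det_le x μ₁ hS₁ hS₁.det_pos le_rfl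
  have hle₂ := gaussDensity_le_of_det_le x μ₂ hS₂ hS₁.det_pos hdet
  have hpos : 0 < π₁ * gaussDensity x μ₁ S₁ + π₂ * gaussDensity x μ₂ S₂ := by
    rcases hπ₁.eq_or_lt with rfl | hπ₁
    · rw [zero_add] at hπ
      simpa [hπ] using h₂
    · positivity
  have hmix : π₁ * gaussDensity x μ₁ S₁ + π₂ * gaussDensity x μ₂ S₂ ≤
      (2 * π) ^ (-(p : ℝ) / 2) * S₁.det ^ (-(1 : ℝ) / 2) := by
    nlinarith [mul_le_mul_of_nonneg_left hle₁ hπ₁, mul_le_mul_of_nonneg_left hle₂ hπ₂]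
  calc _ ≤ _ := log_le_log hpos hmix
    _ = _ := by
      rw [log_mul (by positivity) (rpow_pos_of_pos hS₁.det_pos _).ne', log_rpow (by positivity),
        log_rpow hS₁.det_pos]
      ring

lemma le_gaussKL (μ₁ μ₂ : Fin p → ℝ) {S₁ S₂ : Matrix (Fin p) (Fin p) ℝ} (hS₁ : S₁.PosDef)
    (hS₂ : S₂.PosDef) {k : ℝ} (hk : 0 < k) :
    (log S₂.det - log S₁.det - p + k * (log S₁.det - log S₂.det + p * (1 - log k))) / 2 ≤
      gaussKL μ₁ S₁ μ₂ S₂ := by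
  have htr := hS₂.mul_log_det_div_add_le_trace_inv_mul hS₁ hk
  rw [Fintype.card_fin, log_div hS₁.det_pos.ne' hS₂.det_pos.ne'] at htr
  unfold gaussKL
  rw [log_div hS₂.det_pos.ne' hS₁.det_pos.ne']
  linarith [hS₂.dotProduct_inv_mulVec_nonneg (μ₂ - μ₁)]

lemma gaussKL_nonneg (μ₁ μ₂ : Fin p → ℝ) {S₁ S₂ : Matrix (Fin p) (Fin p) ℝ} (hS₁ : S₁.PosDef)
    (hS₂ : S₂.PosDef) : 0 ≤ gaussKL μ₁ S₁ μ₂ S₂ := by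
  have h := le_gaussKL μ₁ μ₂ hS₁ hS₂ one_pos
  rw [log_one] at h
  linarith

end Gaussian

lemma siaObj_le {p n : ℕ} (x : Fin n → Fin p → ℝ) {π₁ π₂ : ℝ} (hπ₁ : 0 ≤ π₁) (hπ₂ : 0 ≤ π₂)
    (hπ : π₁ + π₂ = 1) (μ₁ μ₂ : Fin p → ℝ) {S₁ S₂ : Matrix (Fin p) (Fin p) ℝ}
    (hS₁ : S₁.PosDef) (hS₂ : S₂.PosDef) (hdet : S₁.det ≤ S₂.det) {w₁ w₂ : ℝ} (hw₁ : 0 ≤ w₁)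
    (hw₂ : 0 < w₂) :
    siaObj x π₁ π₂ μ₁ μ₂ S₁ S₂ w₁ w₂ ≤
      -(n / 2) * log S₂.det - n * p / 2 * log (2 * π) + w₂ * p / 2
        - (n + w₂) / 2 * p * (1 - log ((n + w₂) / w₂)) := by
  set k := (n + w₂) / w₂
  have hk : 0 < k := by positivity
  have hwk : w₂ * k = n + w₂ := by simp only [k]; field_simp
  clear_value k
  have hlik : ∑ i, log (π₁ * gaussDensity (x i) μ₁ S₁ + π₂ * gaussDensity (x i) μ₂ S₂) ≤
      n * (-(p / 2) * log (2 * π) - log S₁.det / 2) :=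
    (Finset.sum_le_sum fun i _ => log_mixture_gaussDensity_le (x i) μ₁ μ₂ hπ₁ hπ₂ hπ hS₁ hS₂
      hdet).trans_eq (by simp; ring)
  have hKL₁ := mul_nonneg hw₁ (gaussKL_nonneg μ₁ μ₂ hS₁ hS₂)
  have hKL₂ := mul_le_mul_of_nonneg_left (le_gaussKL μ₂ μ₁ hS₂ hS₁ hk) hw₂.le
  unfold siaObj
  linear_combination hlik + hKL₁ + hKL₂ + (log S₁.det - log S₂.det - p * (1 - log k)) / 2 * hwk

theorem sia_objective_upper_bound_general (p n : ℕ)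
    (w₁ w₂ c : ℝ) (hw₁ : 0 ≤ w₁) (hw₂ : 0 < w₂) :
    ∃ C : ℝ, ∀ (x : Fin n → Fin p → ℝ) (π₁ π₂ : ℝ), 0 ≤ π₁ → 0 ≤ π₂ → π₁ + π₂ = 1 →
      ∀ (μ₁ μ₂ : Fin p → ℝ) (S₁ S₂ : Matrix (Fin p) (Fin p) ℝ)
        (hS₁ : S₁.PosDef) (hS₂ : S₂.PosDef),
        S₁.det ≤ S₂.det →
        (∀ i, hS₁.1.eigenvalues i ≤ c) →
        (∀ i, hS₂.1.eigenvalues i ≤ c) →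
        siaObj x π₁ π₂ μ₁ μ₂ S₁ S₂ w₁ w₂ ≤
          -((n : ℝ) / 2) * (1 + w₂) *
            (Real.log ((w₂ / (1 + w₂)) • S₂).det + p) + C := by
  refine ⟨-(n * p / 2) * log (2 * π) + w₂ * p / 2
      - (n + w₂) / 2 * p * (1 - log ((n + w₂) / w₂)) + n * w₂ / 2 * (p * log c)
      + n / 2 * (1 + w₂) * (p * log (w₂ / (1 + w₂)) + p), ?_⟩
  intro x π₁ π₂ hπ₁ hπ₂ hπ μ₁ μ₂ S₁ S₂ hS₁ hS₂ hdet _ hev₂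
  have hM := siaObj_le x hπ₁ hπ₂ hπ μ₁ μ₂ hS₁ hS₂ hdet hw₁ hw₂
  have hlogdet : n * w₂ / 2 * log S₂.det ≤ n * w₂ / 2 * (p * log c) := by
    have hS₂c := hS₂.log_det_le hev₂
    rw [Fintype.card_fin] at hS₂c
    gcongr
  rw [det_smul, Fintype.card_fin, log_mul (by positivity) hS₂.det_pos.ne', log_pow]
  linarith

theorem sia_objective_upper_bound (p n : ℕ) (hp : 1 ≤ p) (hn : 1 ≤ n)
    (w₁ w₂ c : ℝ) (hw₁ : 0 ≤ w₁) (hw₂ : 0 < w₂) (hc : 0 < c) :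
    ∃ C : ℝ, ∀ (x : Fin n → Fin p → ℝ) (π₁ π₂ : ℝ), 0 ≤ π₁ → 0 ≤ π₂ → π₁ + π₂ = 1 →
      ∀ (μ₁ μ₂ : Fin p → ℝ) (S₁ S₂ : Matrix (Fin p) (Fin p) ℝ)
        (hS₁ : S₁.PosDef) (hS₂ : S₂.PosDef),
        S₁.det ≤ S₂.det →
        (∀ i, hS₁.1.eigenvalues i ≤ c) →
        (∀ i, hS₂.1.eigenvalues i ≤ c) →
        siaObj x π₁ π₂ μ₁ μ₂ S₁ S₂ w₁ w₂ ≤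
          -((n : ℝ) / 2) * (1 + w₂) *
            (Real.log ((w₂ / (1 + w₂)) • S₂).det + p) + C :=
  sia_objective_upper_bound_general p n w₁ w₂ c hw₁ hw₂
end

section
/- Let p ≥ 1 be an integer, let w₂ > 0 and w₃ > 0 be reals, and let A and S be symmetric positive definite p×p real matrices. Then w₃ log det A − w₂ tr(A · S) ≤ w₃ log det( (w₃/w₂) S⁻¹ ) − w₃ p, with equality when A = (w₃/w₂) S⁻¹. -/
open Matrix Real

/-!
With `T = (w₂ / w₃) • S` the maximizer `(w₃ / w₂) • S⁻¹` is `T⁻¹`, and the inequality is `w₃` times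
`log det (A * T) ≤ tr (A * T) - p`. Writing `T = Bᴴ B`, the matrix `A * T` has the same determinant
and trace as the positive definite `B A Bᴴ`, whose eigenvalues `λᵢ > 0` satisfy `log λᵢ ≤ λᵢ - 1`.
-/

namespace Matrix.PosDef

variable {n : Type*} [Fintype n] [DecidableEq n]

theorem log_det_le_trace_sub_card {M : Matrix n n ℝ} (hM : M.PosDef) :
    Real.log M.det ≤ M.trace - Fintype.card n := by
  have hev := hM.eigenvalues_pos
  rw [hM.isHermitian.det_eq_prod_eigenvalues, hM.isHermitian.trace_eq_sum_eigenvalues]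
  simp only [RCLike.ofReal_real_eq_id, id]
  rw [Real.log_prod fun i _ => (hev i).ne']
  have := Finset.sum_le_sum fun i (_ : i ∈ Finset.univ) => Real.log_le_sub_one_of_pos (hev i)
  simpa [Finset.sum_sub_distrib] using this

open scoped MatrixOrder in
theorem log_det_mul_le_trace_mul_sub_card {A S : Matrix n n ℝ} (hA : A.PosDef)
    (hS : S.PosDef) : Real.log (A * S).det ≤ (A * S).trace - Fintype.card n := by
  obtain ⟨B, rfl⟩ := CStarAlgebra.nonneg_iff_eq_star_mul_self.mp hS.posSemidef.nonneg
  have hB : IsUnit B := by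
    simpa [isUnit_iff_isUnit_det, det_mul] using hS.isUnit
  have hC : (B * A * star B).PosDef := (IsUnit.posDef_star_right_conjugate_iff hB).mpr hA
  have hdet : (B * A * star B).det = (A * (star B * B)).det := by
    simp only [det_mul]; ring
  have htr : (B * A * star B).trace = (A * (star B * B)).trace := by
    rw [trace_mul_cycle, trace_mul_comm]
  simpa [hdet, htr] using hC.log_det_le_trace_sub_card

end Matrix.PosDef

theorem logdet_trace_max_general (p : ℕ) (w₂ w₃ : ℝ) (hw₂ : 0 < w₂) (hw₃ : 0 < w₃)
    (A S : Matrix (Fin p) (Fin p) ℝ) (hA : A.PosDef) (hS : S.PosDef) :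
    w₃ * Real.log A.det - w₂ * (A * S).trace ≤
      w₃ * Real.log ((w₃ / w₂) • S⁻¹).det - w₃ * p ∧
    (A = (w₃ / w₂) • S⁻¹ →
      w₃ * Real.log A.det - w₂ * (A * S).trace =
        w₃ * Real.log ((w₃ / w₂) • S⁻¹).det - w₃ * p) := by
  set T := (w₂ / w₃) • S with hTdef
  have hT : T.PosDef := hS.smul (div_pos hw₂ hw₃)
  have hinv : (w₃ / w₂) • S⁻¹ = T⁻¹ := by
    refine (inv_eq_left_inv ?_).symm
    rw [hTdef, smul_mul_smul, nonsing_inv_mul _ hS.det_pos.ne'.isUnit]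
    simp [hw₂.ne', hw₃.ne']
  have hlogT : Real.log T⁻¹.det = -Real.log T.det := by
    rw [det_nonsing_inv, Ring.inverse_eq_inv, Real.log_inv]
  have htrT : (A * T).trace = w₂ / w₃ * (A * S).trace := by
    rw [hTdef, Matrix.mul_smul, trace_smul, smul_eq_mul]
  rw [hinv, hlogT]
  constructor
  · have hAT := hA.log_det_mul_le_trace_mul_sub_card hT
    rw [det_mul, Real.log_mul hA.det_pos.ne' hT.det_pos.ne', htrT, Fintype.card_fin] at hAT
    have hscaled := mul_le_mul_of_nonneg_left hAT hw₃.le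
    field_simp at hscaled
    linarith
  · rintro rfl
    have htr : (T⁻¹ * S).trace = w₃ / w₂ * p := by
      rw [← hinv, smul_mul, nonsing_inv_mul _ hS.det_pos.ne'.isUnit, trace_smul, trace_one,
        Fintype.card_fin, smul_eq_mul]
    rw [hlogT, htr]
    field_simp

theorem logdet_trace_max (p : ℕ) (hp : 1 ≤ p) (w₂ w₃ : ℝ) (hw₂ : 0 < w₂) (hw₃ : 0 < w₃)
    (A S : Matrix (Fin p) (Fin p) ℝ) (hA : A.PosDef) (hS : S.PosDef) :
    w₃ * Real.log A.det - w₂ * (A * S).trace ≤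
      w₃ * Real.log ((w₃ / w₂) • S⁻¹).det - w₃ * p ∧
    (A = (w₃ / w₂) • S⁻¹ →
      w₃ * Real.log A.det - w₂ * (A * S).trace =
        w₃ * Real.log ((w₃ / w₂) • S⁻¹).det - w₃ * p) :=
  logdet_trace_max_general p w₂ w₃ hw₂ hw₃ A S hA hS
end
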